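/- arXiv:2605.12190 — 2 statements merged into one kernel-verified Lean document; each statement's English description precedes it below -/
import Mathlib

section
/- Define r : ℝ → ℝ by r(u) = (e^u - u - 1)/u^2 for u ≠ 0 and r(0) = 1/2. Then r is nondecreasing on ℝ. -/
/-!
The Bennett ratio has the integral representation `r u = ∫₀¹ (1 - t) e^{u t} dt`, valid also at
`u = 0`; the integrand is nondecreasing in `u` for every `t ∈ [0, 1]`, hence so is `r`.
-/

open Real intervalIntegral

lemma hasDerivAt_bennett_antideriv {u : ℝ} (hu : u ≠ 0) (t : ℝ) :
    HasDerivAt (fun t => (1 - t) * exp (u * t) / u + exp (u * t) / u ^ 2)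
      ((1 - t) * exp (u * t)) t := by
  have hexp : HasDerivAt (fun t => exp (u * t)) (exp (u * t) * u) t :=
    ((hasDerivAt_id t).const_mul u).exp.congr_deriv (by simp)
  have hlin : HasDerivAt (fun t : ℝ => 1 - t) (-1) t := by
    simpa using (hasDerivAt_id t).const_sub 1
  refine (((hlin.mul hexp).div_const u).add (hexp.div_const (u ^ 2))).congr_deriv ?_
  field_simp
  ring

lemma integral_one_sub_mul_exp_mul {u : ℝ} (hu : u ≠ 0) :
    ∫ t in (0 : ℝ)..1, (1 - t) * exp (u * t) = (exp u - u - 1) / u ^ 2 := by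
  rw [integral_eq_sub_of_hasDerivAt (fun t _ => hasDerivAt_bennett_antideriv hu t)
    ((by fun_prop : Continuous fun t => (1 - t) * exp (u * t)).intervalIntegrable _ _)]
  field_simp
  simp only [mul_zero, exp_zero]
  ring

lemma monotone_integral_mul_exp_mul {w : ℝ → ℝ} {a b : ℝ} (hab : a ≤ b) (ha : 0 ≤ a)
    (hw : ContinuousOn w (Set.Icc a b)) (hw_nonneg : ∀ t ∈ Set.Icc a b, 0 ≤ w t) :
    Monotone fun u => ∫ t in a..b, w t * exp (u * t) := by
  intro u v huv
  have hint : ∀ s : ℝ, IntervalIntegrable (fun t => w t * exp (s * t)) MeasureTheory.volume a b :=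
    fun s => (hw.mul (by fun_prop)).intervalIntegrable_of_Icc hab
  refine integral_mono_on hab (hint u) (hint v) fun t ht => ?_
  gcongr
  · exact hw_nonneg t ht
  · exact ha.trans ht.1

/-- The Bennett ratio `r(u) = (e^u - u - 1)/u^2` (with `r(0) = 1/2`) is
nondecreasing on `ℝ`. -/
theorem bennett_ratio_monotone (r : ℝ → ℝ)
    (hr0 : r 0 = 1 / 2)
    (hr : ∀ u : ℝ, u ≠ 0 → r u = (Real.exp u - u - 1) / u ^ 2) :
    Monotone r := by
  have hrep : r = fun u => ∫ t in (0 : ℝ)..1, (1 - t) * exp (u * t) := by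
    funext u
    rcases eq_or_ne u 0 with rfl | hu
    · simp only [hr0, zero_mul, exp_zero, mul_one]
      rw [integral_sub (by simp) (by simp)]
      norm_num
    · rw [hr u hu, integral_one_sub_mul_exp_mul hu]
  rw [hrep]
  exact monotone_integral_mul_exp_mul zero_le_one le_rfl (by fun_prop)
    fun t ht => sub_nonneg.mpr ht.2
end

section
/- Let X be a real random variable with E[X] = 0 and |X| ≤ b almost surely, for some b > 0. Then for every λ ≥ 0, E[e^{λX}] ≤ exp( ((e^{λb} - λb - 1)/b^2) · E[X^2] ). -/
open MeasureTheory

lemma real_exp_tsum (u : ℝ) : Real.exp u = ∑' n : ℕ, u ^ n / n.factorial := by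
  rw [Real.exp_eq_exp_ℝ, NormedSpace.exp_eq_tsum_div]

lemma exp_sub_eq_tsum (u : ℝ) :
    Real.exp u - u - 1 = ∑' n : ℕ, u ^ (n + 2) / (n + 2).factorial := by
  have hs : Summable (fun n : ℕ => u ^ n / n.factorial) :=
    Real.summable_pow_div_factorial u
  have h1 : Summable (fun n : ℕ => u ^ (n + 1) / (n + 1).factorial) :=
    (summable_nat_add_iff 1).mpr hs
  rw [real_exp_tsum, Summable.tsum_eq_zero_add hs, Summable.tsum_eq_zero_add h1]
  simp [Nat.factorial]
  ring

lemma pointwise_bennett {u v : ℝ} (hv : 0 < v) (huv : |u| ≤ v) :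
    Real.exp u - u - 1 ≤ u ^ 2 / v ^ 2 * (Real.exp v - v - 1) := by
  have hsv : Summable (fun n : ℕ => v ^ (n + 2) / (n + 2).factorial) :=
    (summable_nat_add_iff (f := fun n : ℕ => v ^ n / n.factorial) 2).mpr
      (Real.summable_pow_div_factorial v)
  have hsu : Summable (fun n : ℕ => u ^ (n + 2) / (n + 2).factorial) :=
    (summable_nat_add_iff (f := fun n : ℕ => u ^ n / n.factorial) 2).mpr
      (Real.summable_pow_div_factorial u)
  rw [exp_sub_eq_tsum, exp_sub_eq_tsum]
  have key : ∀ n : ℕ, u ^ (n + 2) / (n + 2).factorial ≤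
      u ^ 2 / v ^ 2 * (v ^ (n + 2) / (n + 2).factorial) := by
    intro n
    have hfac : (0 : ℝ) < (n + 2).factorial := by positivity
    rw [mul_div_assoc']
    apply (div_le_div_iff_of_pos_right hfac).mpr
    have h1 : u ^ (n + 2) ≤ |u| ^ (n + 2) := by
      calc u ^ (n + 2) ≤ |u ^ (n + 2)| := le_abs_self _
        _ = |u| ^ (n + 2) := abs_pow u _
    have h2 : |u| ^ (n + 2) = u ^ 2 * |u| ^ n := by
      rw [pow_add, sq_abs, mul_comm]
    have h3 : |u| ^ n ≤ v ^ n := pow_le_pow_left₀ (abs_nonneg u) huv n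
    have h4 : u ^ 2 / v ^ 2 * v ^ (n + 2) = u ^ 2 * v ^ n := by
      field_simp
      ring
    calc u ^ (n + 2) ≤ u ^ 2 * |u| ^ n := by rw [← h2]; exact h1
      _ ≤ u ^ 2 * v ^ n := mul_le_mul_of_nonneg_left h3 (sq_nonneg u)
      _ = u ^ 2 / v ^ 2 * v ^ (n + 2) := h4.symm
  calc ∑' n : ℕ, u ^ (n + 2) / (n + 2).factorial
      ≤ ∑' n : ℕ, u ^ 2 / v ^ 2 * (v ^ (n + 2) / (n + 2).factorial) :=
        Summable.tsum_le_tsum key hsu (hsv.mul_left _)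
    _ = u ^ 2 / v ^ 2 * ∑' n : ℕ, v ^ (n + 2) / (n + 2).factorial := tsum_mul_left

lemma pointwise_bound {b lam x : ℝ} (hb : 0 < b) (hlam : 0 ≤ lam) (hx : |x| ≤ b) :
    Real.exp (lam * x) ≤
      1 + lam * x + (Real.exp (lam * b) - lam * b - 1) / b ^ 2 * x ^ 2 := by
  rcases eq_or_lt_of_le hlam with h0 | hpos
  · simp [← h0]
  · have hv : 0 < lam * b := mul_pos hpos hb
    have huv : |lam * x| ≤ lam * b := by
      rw [abs_mul, abs_of_pos hpos]
      exact mul_le_mul_of_nonneg_left hx hpos.le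
    have := pointwise_bennett hv huv
    have hq : (lam * x) ^ 2 / (lam * b) ^ 2 = x ^ 2 / b ^ 2 := by
      field_simp
    rw [hq] at this
    have hr : x ^ 2 / b ^ 2 * (Real.exp (lam * b) - lam * b - 1) =
        (Real.exp (lam * b) - lam * b - 1) / b ^ 2 * x ^ 2 := by ring
    linarith [this, hr]

/-- Bennett's mgf inequality: if `E[X] = 0` and `|X| ≤ b` a.s., then for `λ ≥ 0`,
`E[e^{λX}] ≤ exp(((e^{λb} - λb - 1)/b²)·E[X²])`. -/
theorem bennett_mgf {Ω : Type*} [MeasurableSpace Ω] (μ : Measure Ω)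
    [IsProbabilityMeasure μ] (X : Ω → ℝ) (b : ℝ) (hb : 0 < b)
    (hmeas : AEStronglyMeasurable X μ)
    (hbdd : ∀ᵐ ω ∂μ, |X ω| ≤ b)
    (hmean : ∫ ω, X ω ∂μ = 0)
    (lam : ℝ) (hlam : 0 ≤ lam) :
    ∫ ω, Real.exp (lam * X ω) ∂μ ≤
      Real.exp (((Real.exp (lam * b) - lam * b - 1) / b ^ 2) * ∫ ω, (X ω) ^ 2 ∂μ) := by
  set c : ℝ := (Real.exp (lam * b) - lam * b - 1) / b ^ 2 with hc
  have hc0 : 0 ≤ c := by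
    apply div_nonneg _ (sq_nonneg b)
    nlinarith [Real.add_one_le_exp (lam * b)]
  -- integrabilities
  have hX : Integrable X μ := by
    refine Integrable.mono' (integrable_const b) hmeas ?_
    filter_upwards [hbdd] with ω h using h
  have hX2 : Integrable (fun ω => (X ω) ^ 2) μ := by
    refine Integrable.mono' (integrable_const (b ^ 2)) (hmeas.pow 2) ?_
    filter_upwards [hbdd] with ω h
    rw [Real.norm_eq_abs, abs_pow]
    exact pow_le_pow_left₀ (abs_nonneg _) h 2
  have hExp : Integrable (fun ω => Real.exp (lam * X ω)) μ := by
    refine Integrable.mono' (integrable_const (Real.exp (lam * b)))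
      ((Real.continuous_exp.comp (continuous_const.mul continuous_id)).comp_aestronglyMeasurable hmeas) ?_
    filter_upwards [hbdd] with ω h
    rw [Real.norm_eq_abs, Real.abs_exp]
    apply Real.exp_le_exp.mpr
    exact mul_le_mul_of_nonneg_left (le_trans (le_abs_self _) h) hlam
  have hRHS : Integrable (fun ω => 1 + lam * X ω + c * (X ω) ^ 2) μ :=
    ((integrable_const 1).add (hX.const_mul lam)).add (hX2.const_mul c)
  have step1 : ∫ ω, Real.exp (lam * X ω) ∂μ ≤
      ∫ ω, (1 + lam * X ω + c * (X ω) ^ 2) ∂μ := by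
    refine integral_mono_ae hExp hRHS ?_
    filter_upwards [hbdd] with ω h
    exact pointwise_bound hb hlam h
  have step2 : ∫ ω, (1 + lam * X ω + c * (X ω) ^ 2) ∂μ =
      1 + c * ∫ ω, (X ω) ^ 2 ∂μ := by
    have e1 : ∫ ω, (1 + lam * X ω + c * (X ω) ^ 2) ∂μ =
        (∫ ω, (1 + lam * X ω) ∂μ) + ∫ ω, c * (X ω) ^ 2 ∂μ :=
      integral_add ((integrable_const 1).add (hX.const_mul lam)) (hX2.const_mul c)
    have e2 : ∫ ω, (1 + lam * X ω) ∂μ = (∫ ω, (1:ℝ) ∂μ) + ∫ ω, lam * X ω ∂μ :=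
      integral_add (integrable_const 1) (hX.const_mul lam)
    rw [e1, e2, integral_const_mul, integral_const_mul, hmean]
    simp
  calc ∫ ω, Real.exp (lam * X ω) ∂μ ≤ 1 + c * ∫ ω, (X ω) ^ 2 ∂μ := by
        rw [← step2]; exact step1
    _ ≤ Real.exp (c * ∫ ω, (X ω) ^ 2 ∂μ) := by
        have := Real.add_one_le_exp (c * ∫ ω, (X ω) ^ 2 ∂μ)
        linarith
end
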